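/- Let N ≥ 1, A ∈ ℝ^{2N×2N}, B ∈ ℝ^{2N×N}, and let P, Q be symmetric real 2N×2N matrices with AᵀP + PA = −Q. Let ε > 0, ρ̄ > 0, and let η, ρ : ℝ → ℝ^N × ℝ be functions with ‖η(t)‖ ≤ ρ(t) ≤ ρ̄ for all t. Let e : ℝ → ℝ^{2N} be differentiable and satisfy ė(t) = A e(t) + B(r(t) + η(t)), where w(t) = Bᵀ P e(t) and r(t) = −ρ(t) w(t)/‖w(t)‖ if ‖w(t)‖ > ε and r(t) = −ρ(t) w(t)/ε if ‖w(t)‖ ≤ ε. Then the Lyapunov function V(t) = ⟨e(t), P e(t)⟩ satisfies V̇(t) ≤ −⟨e(t), Q e(t)⟩ + ε ρ̄ / 2 for all t. -/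

import Mathlib

/-!
Since `P` is symmetric, `V̇ = 2⟨P e, A e + B (r + η)⟩`. The Lyapunov equation turns
`2⟨P e, A e⟩` into `-⟨e, Q e⟩`, and `2⟨P e, B (r + η)⟩ = 2⟨w, r + η⟩`. The robust control law
bounds `⟨w, r + η⟩` by `ερ/4`: it is nonpositive when `‖w‖ > ε`, and in the boundary layer
`‖w‖ ≤ ε` it is at most `ρ (‖w‖ - ‖w‖² / ε)`, whose maximum over `‖w‖` is `ερ/4`.
-/

open Matrix
open scoped RealInnerProductSpace

/-- Matrix-vector multiplication viewed as a map between Euclidean spaces. -/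
noncomputable def mv {m n : ℕ} (A : Matrix (Fin m) (Fin n) ℝ)
    (x : EuclideanSpace ℝ (Fin n)) : EuclideanSpace ℝ (Fin m) :=
  (EuclideanSpace.equiv (Fin m) ℝ).symm (A.mulVec ((EuclideanSpace.equiv (Fin n) ℝ) x))

section MatrixAction

variable {m n k : ℕ}

lemma mv_eq_toEuclideanLin (A : Matrix (Fin m) (Fin n) ℝ) : mv A = toEuclideanLin A := rfl

lemma inner_mv_right (A : Matrix (Fin m) (Fin n) ℝ)
    (x : EuclideanSpace ℝ (Fin m)) (y : EuclideanSpace ℝ (Fin n)) :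
    ⟪x, mv A y⟫ = ⟪mv Aᵀ x, y⟫ := by
  rw [mv_eq_toEuclideanLin, mv_eq_toEuclideanLin, ← conjTranspose_eq_transpose_of_trivial,
    toEuclideanLin_conjTranspose_eq_adjoint, LinearMap.adjoint_inner_left]

lemma mv_mul (A : Matrix (Fin m) (Fin n) ℝ) (B : Matrix (Fin n) (Fin k) ℝ)
    (x : EuclideanSpace ℝ (Fin k)) : mv (A * B) x = mv A (mv B x) := by
  simp [mv_eq_toEuclideanLin]

lemma add_mv (A B : Matrix (Fin m) (Fin n) ℝ) (x : EuclideanSpace ℝ (Fin n)) :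
    mv (A + B) x = mv A x + mv B x := by
  simp [mv_eq_toEuclideanLin]

lemma neg_mv (A : Matrix (Fin m) (Fin n) ℝ) (x : EuclideanSpace ℝ (Fin n)) :
    mv (-A) x = -mv A x := by
  simp [mv_eq_toEuclideanLin]

lemma HasDerivAt.mv_apply (A : Matrix (Fin m) (Fin n) ℝ)
    {f : ℝ → EuclideanSpace ℝ (Fin n)} {f' : EuclideanSpace ℝ (Fin n)} {t : ℝ}
    (hf : HasDerivAt f f' t) :
    HasDerivAt (fun s => mv A (f s)) (mv A f') t :=
  (toEuclideanLin A).toContinuousLinearMap.hasFDerivAt.comp_hasDerivAt t hf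

end MatrixAction

section QuadraticForm

variable {n : ℕ} {P : Matrix (Fin n) (Fin n) ℝ}

lemma hasDerivAt_inner_mv_self (hP : P.IsSymm) {e : ℝ → EuclideanSpace ℝ (Fin n)}
    {e' : EuclideanSpace ℝ (Fin n)} {t : ℝ} (he : HasDerivAt e e' t) :
    HasDerivAt (fun s => ⟪e s, mv P (e s)⟫) (2 * ⟪mv P (e t), e'⟫) t := by
  refine (he.inner ℝ (he.mv_apply P)).congr_deriv ?_
  rw [inner_mv_right, hP.eq, real_inner_comm e', two_mul]

lemma two_inner_mv_mv_self_of_lyapunov (hP : P.IsSymm) {A Q : Matrix (Fin n) (Fin n) ℝ}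
    (hLyap : Aᵀ * P + P * A = -Q) (x : EuclideanSpace ℝ (Fin n)) :
    2 * ⟪mv P x, mv A x⟫ = -⟪x, mv Q x⟫ := by
  have hPA : ⟪mv P x, mv A x⟫ = ⟪x, mv (P * A) x⟫ := by
    rw [mv_mul, inner_mv_right P x, hP.eq]
  have hAP : ⟪mv P x, mv A x⟫ = ⟪x, mv (Aᵀ * P) x⟫ := by
    rw [mv_mul, inner_mv_right Aᵀ x, transpose_transpose, real_inner_comm]
  calc 2 * ⟪mv P x, mv A x⟫ = ⟪x, mv (Aᵀ * P) x⟫ + ⟪x, mv (P * A) x⟫ := by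
        rw [← hAP, ← hPA, two_mul]
    _ = -⟪x, mv Q x⟫ := by
        rw [← inner_add_right, ← add_mv, hLyap, neg_mv, inner_neg_right]

end QuadraticForm

section RobustControl

variable {E : Type*} [NormedAddCommGroup E] [InnerProductSpace ℝ E]

/-- The outer-loop law `r` as a function of `w = BᵀP e` and the uncertainty bound `ρ`. -/
noncomputable def robustControl (ε ρ : ℝ) (w : E) : E :=
  if ε < ‖w‖ then (-(ρ / ‖w‖)) • w else (-(ρ / ε)) • w

lemma inner_robustControl_add_le {ε ρ : ℝ} (hε : 0 < ε) (w : E) {η : E} (hη : ‖η‖ ≤ ρ) :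
    ⟪w, robustControl ε ρ w + η⟫ ≤ ε * ρ / 4 := by
  have hρ : 0 ≤ ρ := (norm_nonneg η).trans hη
  have hwη : ⟪w, η⟫ ≤ ‖w‖ * ρ :=
    (real_inner_le_norm w η).trans (mul_le_mul_of_nonneg_left hη (norm_nonneg w))
  rw [inner_add_right, robustControl]
  split_ifs with hw
  · have hw₀ : ‖w‖ ≠ 0 := (hε.trans hw).ne'
    rw [real_inner_smul_right, real_inner_self_eq_norm_sq]
    have hscale : ρ / ‖w‖ * ‖w‖ ^ 2 = ρ * ‖w‖ := by field_simp
    have : 0 ≤ ε * ρ := mul_nonneg hε.le hρ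
    linarith
  · rw [real_inner_smul_right, real_inner_self_eq_norm_sq]
    have hscale : ρ / ε * ‖w‖ ^ 2 = ρ * ‖w‖ ^ 2 / ε := by ring
    have hlayer : ε * ρ / 4 - (ρ * ‖w‖ - ρ * ‖w‖ ^ 2 / ε) = ρ * (‖w‖ - ε / 2) ^ 2 / ε := by
      field_simp
      ring
    have : 0 ≤ ρ * (‖w‖ - ε / 2) ^ 2 / ε := by positivity
    linarith

end RobustControl

theorem lyapunov_derivative_robust_bound_general
    (N : ℕ)
    (A : Matrix (Fin (2 * N)) (Fin (2 * N)) ℝ)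
    (B : Matrix (Fin (2 * N)) (Fin N) ℝ)
    (P Q : Matrix (Fin (2 * N)) (Fin (2 * N)) ℝ)
    (hP : P.IsSymm)
    (hLyap : Aᵀ * P + P * A = -Q)
    (ε ρbar : ℝ) (hε : 0 < ε)
    (η : ℝ → EuclideanSpace ℝ (Fin N)) (ρ : ℝ → ℝ)
    (hηρ : ∀ t, ‖η t‖ ≤ ρ t) (hρ : ∀ t, ρ t ≤ ρbar)
    (e : ℝ → EuclideanSpace ℝ (Fin (2 * N)))
    (w : ℝ → EuclideanSpace ℝ (Fin N))
    (hw : ∀ t, w t = mv Bᵀ (mv P (e t)))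
    (r : ℝ → EuclideanSpace ℝ (Fin N))
    (hr : ∀ t, r t =
      if ε < ‖w t‖ then (-(ρ t / ‖w t‖)) • w t else (-(ρ t / ε)) • w t)
    (he : ∀ t, HasDerivAt e (mv A (e t) + mv B (r t + η t)) t) :
    ∀ t, DifferentiableAt ℝ (fun s => ⟪e s, mv P (e s)⟫) t ∧
      deriv (fun s => ⟪e s, mv P (e s)⟫) t ≤ -⟪e t, mv Q (e t)⟫ + ε * ρbar / 2 := by
  intro t
  have hV := hasDerivAt_inner_mv_self hP (he t)
  refine ⟨hV.differentiableAt, ?_⟩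
  have hcontrol : ⟪w t, r t + η t⟫ ≤ ε * ρ t / 4 := by
    rw [hr t]
    exact inner_robustControl_add_le hε (w t) (hηρ t)
  have hρε : ε * ρ t ≤ ε * ρbar := mul_le_mul_of_nonneg_left (hρ t) hε.le
  rw [hV.deriv, inner_add_right, mul_add, two_inner_mv_mv_self_of_lyapunov hP hLyap,
    inner_mv_right B, ← hw]
  linarith

/-- Under the robust outer-loop control law, with
`AᵀP + PA = −Q`, `‖η(t)‖ ≤ ρ(t) ≤ ρ̄`, `w(t) = BᵀP e(t)`, and
`r(t) = −ρ(t) w(t)/‖w(t)‖` if `‖w(t)‖ > ε`, `r(t) = −ρ(t) w(t)/ε` otherwise,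
the Lyapunov function `V(t) = ⟨e(t), P e(t)⟩` along the error dynamics
`ė = A e + B (r + η)` satisfies `V̇(t) ≤ −⟨e(t), Q e(t)⟩ + ε ρ̄ / 2`. -/
theorem lyapunov_derivative_robust_bound
    (N : ℕ) (hN : 1 ≤ N)
    (A : Matrix (Fin (2 * N)) (Fin (2 * N)) ℝ)
    (B : Matrix (Fin (2 * N)) (Fin N) ℝ)
    (P Q : Matrix (Fin (2 * N)) (Fin (2 * N)) ℝ)
    (hP : P.IsSymm) (hQ : Q.IsSymm)
    (hLyap : Aᵀ * P + P * A = -Q)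
    (ε ρbar : ℝ) (hε : 0 < ε) (hρbar : 0 < ρbar)
    (η : ℝ → EuclideanSpace ℝ (Fin N)) (ρ : ℝ → ℝ)
    (hηρ : ∀ t, ‖η t‖ ≤ ρ t) (hρ : ∀ t, ρ t ≤ ρbar)
    (e : ℝ → EuclideanSpace ℝ (Fin (2 * N)))
    (w : ℝ → EuclideanSpace ℝ (Fin N))
    (hw : ∀ t, w t = mv Bᵀ (mv P (e t)))
    (r : ℝ → EuclideanSpace ℝ (Fin N))
    (hr : ∀ t, r t =
      if ε < ‖w t‖ then (-(ρ t / ‖w t‖)) • w t else (-(ρ t / ε)) • w t)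
    (he : ∀ t, HasDerivAt e (mv A (e t) + mv B (r t + η t)) t) :
    ∀ t, DifferentiableAt ℝ (fun s => ⟪e s, mv P (e s)⟫) t ∧
      deriv (fun s => ⟪e s, mv P (e s)⟫) t ≤ -⟪e t, mv Q (e t)⟫ + ε * ρbar / 2 :=
  lyapunov_derivative_robust_bound_general N A B P Q hP hLyap ε ρbar hε η ρ hηρ hρ e w hw r hr he
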